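/- arXiv:1810.07016 — 3 statements merged into one kernel-verified Lean document; each statement's English description precedes it below -/
import Mathlib

section
/- For the equation e^m m^z = n with z fixed and n large, the approximate solution m = ln n - z ln ln n satisfies e^m m^z / n → 1 as n → ∞ (i.e., exp(ln n - z ln ln n) · (ln n - z ln ln n)^z / n tends to 1). -/
open Real Filter

lemma aux_ratio : Tendsto (fun n : ℝ => Real.log (Real.log n) / Real.log n) atTop (nhds 0) :=
  (Real.isLittleO_log_id_atTop.tendsto_div_nhds_zero).comp Real.tendsto_log_atTop

/-- For the equation `e^m m^z = n` with `z` fixed, the approximate solution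
`m = ln n - z ln ln n` satisfies `e^m m^z / n → 1` as `n → ∞`. -/
theorem stmt_0 (z : ℝ) :
    Tendsto (fun n : ℝ =>
        Real.exp (Real.log n - z * Real.log (Real.log n)) *
          (Real.log n - z * Real.log (Real.log n)) ^ z / n)
      atTop (nhds 1) := by
  have hratio : Tendsto (fun n : ℝ => 1 - z * (Real.log (Real.log n) / Real.log n))
      atTop (nhds 1) := by
    have := (aux_ratio.const_mul z).const_sub 1
    simpa using this
  have hgoal : Tendsto (fun n : ℝ =>
      (1 - z * (Real.log (Real.log n) / Real.log n)) ^ z) atTop (nhds 1) := by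
    have := hratio.rpow_const (p := z) (Or.inl one_ne_zero)
    simpa using this
  refine hgoal.congr' ?_
  -- eventually the two functions agree
  have h1 : ∀ᶠ n : ℝ in atTop, 1 - z * (Real.log (Real.log n) / Real.log n) > 1/2 :=
    hratio.eventually (eventually_gt_nhds (by norm_num))
  have h2 : ∀ᶠ n : ℝ in atTop, 1 < Real.log n :=
    Real.tendsto_log_atTop.eventually_gt_atTop 1
  have h3 : ∀ᶠ n : ℝ in atTop, (0:ℝ) < n := eventually_gt_atTop 0
  filter_upwards [h1, h2, h3] with n hr hL hn
  have hL0 : (0:ℝ) < Real.log n := lt_trans one_pos hL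
  set L := Real.log n with hLdef
  set LL := Real.log L with hLLdef
  have hfrac : 1 - z * (LL / L) = (L - z * LL) / L := by
    field_simp
  have hm : 0 < L - z * LL := by
    have : (0:ℝ) < (L - z * LL) / L := by rw [← hfrac]; linarith
    exact (div_pos_iff.mp this).resolve_right (fun h => absurd h.2 (not_lt.2 hL0.le)) |>.1
  -- rewrite
  rw [hfrac, Real.div_rpow hm.le hL0.le]
  have hexp : Real.exp (L - z * LL) = n * L ^ (-z) := by
    rw [Real.rpow_def_of_pos hL0, Real.exp_sub]
    rw [show Real.log L * (-z) = -(z * LL) from by ring, Real.exp_neg,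
      Real.exp_log hn, div_eq_mul_inv]
  rw [hexp]
  rw [Real.rpow_neg hL0.le]
  field_simp
end

section
/- Case I variance bound, h < σ branch: for α > a + 1/2 with a ≥ 0 and 0 < h < σ ≤ 1, there is a constant C depending only on a, α such that ∫_0^{1/h} (σ²s²+1)^{-α} (s²+1)^a ds ≤ C σ^{-(2a+1)}. (After substituting u = σs, the integral is bounded by σ^{-(2a+1)} ∫_0^∞ u^{2a}(u²+1)^{-α} du + lower order terms, and the latter integral converges since 2α - 2a > 1.) -/
open Real MeasureTheory Set

lemma aux_integrable {β : ℝ} (hβ : 1 / 2 < β) :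
    IntegrableOn (fun u : ℝ => (u ^ 2 + 1) ^ (-β)) (Ioi 0) := by
  have hcont : Continuous fun u : ℝ => (u ^ 2 + 1) ^ (-β) := by
    apply Continuous.rpow_const (by continuity)
    intro x
    left
    positivity
  have h1 : IntegrableOn (fun u : ℝ => (u ^ 2 + 1) ^ (-β)) (Ioc 0 1) :=
    hcont.integrableOn_Ioc
  have h2 : IntegrableOn (fun u : ℝ => (u ^ 2 + 1) ^ (-β)) (Ioi 1) := by
    have hint : IntegrableOn (fun u : ℝ => u ^ (-(2 * β))) (Ioi 1) :=
      integrableOn_Ioi_rpow_of_lt (by linarith) one_pos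
    refine hint.mono' hcont.aestronglyMeasurable ?_
    filter_upwards [ae_restrict_mem measurableSet_Ioi] with u hu
    have hu0 : (0 : ℝ) < u := lt_trans one_pos hu
    have h1 : (u ^ 2 : ℝ) ^ (-β) ≤ u ^ (-(2 * β)) := by
      rw [← Real.rpow_natCast u 2, ← Real.rpow_mul hu0.le]
      norm_num
    have h2 : ((u ^ 2 + 1) : ℝ) ^ (-β) ≤ (u ^ 2 : ℝ) ^ (-β) := by
      rw [Real.rpow_neg (by positivity), Real.rpow_neg (by positivity)]
      exact inv_anti₀ (by positivity)
        (Real.rpow_le_rpow (by positivity) (by linarith) (by linarith))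
    calc ‖((u ^ 2 + 1) : ℝ) ^ (-β)‖ = ((u ^ 2 + 1) : ℝ) ^ (-β) := by
          rw [Real.norm_eq_abs, abs_of_nonneg (Real.rpow_nonneg (by positivity) _)]
      _ ≤ u ^ (-(2 * β)) := h2.trans h1
  have : Ioi (0 : ℝ) ⊆ Ioc 0 1 ∪ Ioi 1 := by
    intro x hx
    rcases le_or_gt x 1 with h | h
    · exact Or.inl ⟨hx, h⟩
    · exact Or.inr h
  exact (h1.union h2).mono_set this

/-- Case I variance bound, `h < σ` branch: for `α > a + 1/2` with `a ≥ 0`,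
there is a constant `C > 0` depending only on `a, α` such that for all
`0 < h < σ ≤ 1`,
`∫_0^{1/h} (σ²s²+1)^{-α} (s²+1)^a ds ≤ C σ^{-(2a+1)}`. -/
theorem stmt_14 (a α : ℝ) (ha : 0 ≤ a) (hα : a + 1 / 2 < α) :
    ∃ C : ℝ, 0 < C ∧ ∀ σ h : ℝ, 0 < h → h < σ → σ ≤ 1 →
      (∫ s in (0 : ℝ)..(1 / h), (σ ^ 2 * s ^ 2 + 1) ^ (-α) * (s ^ 2 + 1) ^ a)
        ≤ C * σ ^ (-(2 * a + 1)) := by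
  set β := α - a with hβdef
  have hβ : 1 / 2 < β := by simp [hβdef]; linarith
  have hint := aux_integrable hβ
  set I := ∫ u in Ioi (0 : ℝ), (u ^ 2 + 1) ^ (-β) with hIdef
  have hI0 : 0 ≤ I :=
    MeasureTheory.integral_nonneg fun u => Real.rpow_nonneg (by positivity) _
  refine ⟨I + 1, by linarith, fun σ h hh hhσ hσ1 => ?_⟩
  have hσ : 0 < σ := hh.trans hhσ
  have hh1 : 0 < 1 / h := by positivity
  -- pointwise bound
  have key : ∀ s : ℝ,
      (σ ^ 2 * s ^ 2 + 1) ^ (-α) * (s ^ 2 + 1) ^ a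
        ≤ σ ^ (-(2 * a)) * (σ ^ 2 * s ^ 2 + 1) ^ (-β) := by
    intro s
    have hb : (0 : ℝ) < σ ^ 2 * s ^ 2 + 1 := by positivity
    have h1 : (s ^ 2 + 1 : ℝ) ^ a ≤ ((σ ^ 2 * s ^ 2 + 1) / σ ^ 2) ^ a := by
      apply Real.rpow_le_rpow (by positivity) _ ha
      rw [le_div_iff₀ (by positivity)]
      nlinarith [sq_nonneg s, sq_nonneg σ]
    have h2 : ((σ ^ 2 * s ^ 2 + 1) / σ ^ 2 : ℝ) ^ a
        = (σ ^ 2 * s ^ 2 + 1) ^ a * σ ^ (-(2 * a)) := by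
      rw [Real.div_rpow hb.le (by positivity), ← Real.rpow_natCast σ 2,
        ← Real.rpow_mul hσ.le, div_eq_mul_inv, ← Real.rpow_neg hσ.le]
      norm_num
    calc (σ ^ 2 * s ^ 2 + 1) ^ (-α) * (s ^ 2 + 1) ^ a
        ≤ (σ ^ 2 * s ^ 2 + 1) ^ (-α) * ((σ ^ 2 * s ^ 2 + 1) ^ a * σ ^ (-(2 * a))) := by
          rw [← h2]
          exact mul_le_mul_of_nonneg_left h1 (Real.rpow_nonneg hb.le _)
      _ = σ ^ (-(2 * a)) * (σ ^ 2 * s ^ 2 + 1) ^ (-β) := by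
          rw [← mul_assoc, ← Real.rpow_add hb]
          ring_nf
          rw [hβdef]; ring_nf
  -- continuity of the functions involved
  have hc1 : Continuous fun s : ℝ => (σ ^ 2 * s ^ 2 + 1) ^ (-α) * (s ^ 2 + 1) ^ a := by
    apply Continuous.mul
    · exact Continuous.rpow_const (by continuity) fun x => Or.inl (by positivity)
    · exact Continuous.rpow_const (by continuity) fun x => Or.inl (by positivity)
  have hc2 : Continuous fun s : ℝ => (σ ^ 2 * s ^ 2 + 1) ^ (-β) :=
    Continuous.rpow_const (by continuity) fun x => Or.inl (by positivity)
  -- first step: interval integral bound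
  have step1 : (∫ s in (0 : ℝ)..(1 / h), (σ ^ 2 * s ^ 2 + 1) ^ (-α) * (s ^ 2 + 1) ^ a)
      ≤ ∫ s in (0 : ℝ)..(1 / h), σ ^ (-(2 * a)) * (σ ^ 2 * s ^ 2 + 1) ^ (-β) := by
    apply intervalIntegral.integral_mono_on hh1.le
      (hc1.intervalIntegrable _ _) ((continuous_const.mul hc2).intervalIntegrable _ _)
    intro s _
    exact key s
  -- integrability of the comparison function on Ioi 0
  have hintσ : IntegrableOn (fun s : ℝ => (σ ^ 2 * s ^ 2 + 1) ^ (-β)) (Ioi 0) := by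
    have := (integrableOn_Ioi_comp_mul_left_iff
      (fun u : ℝ => (u ^ 2 + 1) ^ (-β)) 0 hσ).mpr (by simpa using hint)
    refine this.congr_fun (fun s _ => ?_) measurableSet_Ioi
    simp [mul_pow]
  -- second step: extend to Ioi 0
  have step2 : (∫ s in (0 : ℝ)..(1 / h), (σ ^ 2 * s ^ 2 + 1) ^ (-β))
      ≤ ∫ s in Ioi (0 : ℝ), (σ ^ 2 * s ^ 2 + 1) ^ (-β) := by
    rw [intervalIntegral.integral_of_le hh1.le]
    apply setIntegral_mono_set hintσ
    · filter_upwards with s using Real.rpow_nonneg (by positivity) _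
    · filter_upwards with s hs using hs.1
  -- substitution
  have step3 : (∫ s in Ioi (0 : ℝ), (σ ^ 2 * s ^ 2 + 1) ^ (-β)) = σ⁻¹ * I := by
    have := MeasureTheory.integral_comp_mul_left_Ioi
      (fun u : ℝ => (u ^ 2 + 1) ^ (-β)) 0 hσ
    simp only [mul_zero, smul_eq_mul] at this
    rw [← this]
    congr 1
    ext s
    simp [mul_pow]
  have hrw : σ ^ (-(2 * a)) * σ⁻¹ = σ ^ (-(2 * a + 1)) := by
    rw [← Real.rpow_neg_one σ, ← Real.rpow_add hσ]
    ring_nf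
  calc (∫ s in (0 : ℝ)..(1 / h), (σ ^ 2 * s ^ 2 + 1) ^ (-α) * (s ^ 2 + 1) ^ a)
      ≤ ∫ s in (0 : ℝ)..(1 / h), σ ^ (-(2 * a)) * (σ ^ 2 * s ^ 2 + 1) ^ (-β) := step1
    _ = σ ^ (-(2 * a)) * ∫ s in (0 : ℝ)..(1 / h), (σ ^ 2 * s ^ 2 + 1) ^ (-β) := by
        rw [intervalIntegral.integral_const_mul]
    _ ≤ σ ^ (-(2 * a)) * (σ⁻¹ * I) := by
        apply mul_le_mul_of_nonneg_left _ (Real.rpow_nonneg hσ.le _)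
        rw [← step3]; exact step2
    _ = I * σ ^ (-(2 * a + 1)) := by rw [← mul_assoc, hrw]; ring
    _ ≤ (I + 1) * σ ^ (-(2 * a + 1)) := by
        apply mul_le_mul_of_nonneg_right (by linarith) (Real.rpow_nonneg hσ.le _)
end

section
/- Case IV variance bound, h < σ branch: for β > 0, γ > 0, α ≥ 0, a ≥ 0 and 0 < h < σ, there is a constant C (depending on a, α, β, γ) such that h^{-1} ∫_0^1 (σ²z²h^{-2}+1)^{-α} (z²h^{-2}+1)^a exp(-2γ σ^β z^β h^{-β}) dz ≤ C σ^{-(2a+1)}. Equivalently, after the change of variables u = 2γ(σz/h)^β, the integral is controlled by a convergent Gamma-type integral. -/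
open Real MeasureTheory Set

lemma aux_int {q b : ℝ} (hq : -1 < q) (hb : 0 < b) :
    IntegrableOn (fun x : ℝ => x ^ q * Real.exp (-(b * x))) (Ioi 0) := by
  have h := Real.GammaIntegral_convergent (s := q + 1) (by linarith)
  simp only [add_sub_cancel_right] at h
  have h2 := (integrableOn_Ioi_comp_mul_left_iff
    (fun x => Real.exp (-x) * x ^ q) 0 hb).mpr (by simpa using h)
  refine IntegrableOn.congr_fun (h2.const_mul (b ^ (-q))) (fun x hx => ?_) measurableSet_Ioi
  have hx0 : (0:ℝ) < x := hx
  rw [Real.mul_rpow hb.le hx0.le]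
  have hbq : b ^ (-q) * b ^ q = 1 := by rw [← Real.rpow_add hb]; simp
  linear_combination (Real.exp (-(b * x)) * x ^ q) * hbq

lemma aux_int2 {s b p : ℝ} (hs : -1 < s) (hb : 0 < b) (hp : 0 < p) :
    IntegrableOn (fun x : ℝ => x ^ s * Real.exp (-(b * x ^ p))) (Ioi 0) := by
  set q : ℝ := (s + 1) / p - 1 with hq
  have hq1 : -1 < q := by
    have : 0 < (s + 1) / p := div_pos (by linarith) hp
    simp only [hq]; linarith
  have hf : IntegrableOn (fun y : ℝ => y ^ q * Real.exp (-(b * y))) (Ioi 0) := aux_int hq1 hb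
  have h2 := (integrableOn_Ioi_comp_rpow_iff' (fun y : ℝ => y ^ q * Real.exp (-(b * y))) hp.ne').mpr hf
  refine IntegrableOn.congr_fun h2 (fun x hx => ?_) measurableSet_Ioi
  have hx0 : (0:ℝ) < x := hx
  simp only [smul_eq_mul]
  rw [← Real.rpow_mul hx0.le, ← mul_assoc, ← Real.rpow_add hx0]
  rw [show p - 1 + p * q = s by rw [hq]; field_simp; ring]

lemma aux_poly {a : ℝ} (ha : 0 ≤ a) {x : ℝ} (hx : 0 < x) :
    (x ^ 2 + 1 : ℝ) ^ a ≤ 2 ^ a * (x ^ (2 * a) + 1) := by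
  rcases le_total x 1 with hx1 | hx1
  · have h1 : (x ^ 2 + 1 : ℝ) ^ a ≤ 2 ^ a :=
      Real.rpow_le_rpow (by positivity) (by nlinarith) ha
    have h2 : (1:ℝ) ≤ x ^ (2 * a) + 1 := by
      have := Real.rpow_nonneg hx.le (2 * a); linarith
    calc (x ^ 2 + 1 : ℝ) ^ a ≤ 2 ^ a := h1
      _ = 2 ^ a * 1 := (mul_one _).symm
      _ ≤ 2 ^ a * (x ^ (2 * a) + 1) := mul_le_mul_of_nonneg_left h2 (by positivity)
  · have h2 : (x ^ 2 + 1 : ℝ) ^ a ≤ (2 * x ^ 2) ^ a :=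
      Real.rpow_le_rpow (by positivity) (by nlinarith) ha
    have h3 : ((2 : ℝ) * x ^ 2) ^ a = 2 ^ a * x ^ (2 * a) := by
      rw [Real.mul_rpow (by norm_num) (by positivity), ← Real.rpow_natCast x 2,
        ← Real.rpow_mul hx.le]
      norm_num
    calc (x ^ 2 + 1 : ℝ) ^ a ≤ 2 ^ a * x ^ (2 * a) := by rw [← h3]; exact h2
      _ ≤ 2 ^ a * (x ^ (2 * a) + 1) := by
          nlinarith [Real.rpow_nonneg (le_of_lt hx) (2*a),
            Real.rpow_nonneg (show (0:ℝ) ≤ 2 by norm_num) a]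

/-- Case IV variance bound, `h < σ` branch: for `β, γ > 0` and `α, a ≥ 0`,
there is a constant `C > 0` (depending on `a, α, β, γ`) such that for all
`0 < h < σ ≤ 1`,
`h⁻¹ ∫_0^1 (σ²z²h^{-2}+1)^{-α} (z²h^{-2}+1)^a exp(-2γσ^β z^β h^{-β}) dz
  ≤ C σ^{-(2a+1)}`. -/
theorem stmt_16 (a α β γ : ℝ) (ha : 0 ≤ a) (hα : 0 ≤ α) (hβ : 0 < β) (hγ : 0 < γ) :
    ∃ C : ℝ, 0 < C ∧ ∀ σ h : ℝ, 0 < h → h < σ → σ ≤ 1 →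
      h⁻¹ * (∫ z in (0 : ℝ)..1,
          (σ ^ 2 * z ^ 2 * h ^ (-2 : ℝ) + 1) ^ (-α) * (z ^ 2 * h ^ (-2 : ℝ) + 1) ^ a *
            Real.exp (-2 * γ * σ ^ β * z ^ β * h ^ (-β)))
        ≤ C * σ ^ (-(2 * a + 1)) := by
  set g : ℝ → ℝ := fun w => (w ^ 2 + 1) ^ a * Real.exp (-(2 * γ) * w ^ β) with hgdef
  have hgnn : ∀ w, 0 ≤ g w := fun w => by
    have := Real.exp_pos (-(2 * γ) * w ^ β)
    have := Real.rpow_nonneg (show (0:ℝ) ≤ w ^ 2 + 1 by positivity) a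
    positivity
  have cβ : Continuous fun w : ℝ => w ^ β :=
    continuous_id.rpow_const fun x => Or.inr hβ.le
  have hcg : Continuous g := by
    have c1 : Continuous fun w : ℝ => (w ^ 2 + 1 : ℝ) ^ a :=
      (by continuity : Continuous fun w : ℝ => (w ^ 2 + 1 : ℝ)).rpow_const
        fun x => Or.inl (by positivity)
    exact c1.mul (Real.continuous_exp.comp (continuous_const.mul cβ))
  -- integrability of g on Ioi 0
  have hgi : IntegrableOn g (Ioi 0) := by
    have hB1 : IntegrableOn (fun x : ℝ => x ^ (2 * a) * Real.exp (-(2 * γ * x ^ β))) (Ioi 0) := by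
      have := aux_int2 (s := 2 * a) (b := 2 * γ) (p := β) (by linarith) (by linarith) hβ
      refine this.congr_fun (fun x _ => by ring_nf) measurableSet_Ioi
    have hB0 : IntegrableOn (fun x : ℝ => x ^ (0:ℝ) * Real.exp (-(2 * γ * x ^ β))) (Ioi 0) := by
      have := aux_int2 (s := 0) (b := 2 * γ) (p := β) (by norm_num) (by linarith) hβ
      refine this.congr_fun (fun x _ => by ring_nf) measurableSet_Ioi
    have hBint : IntegrableOn
        (fun x : ℝ => 2 ^ a * (x ^ (2 * a) * Real.exp (-(2 * γ * x ^ β)))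
          + 2 ^ a * (x ^ (0:ℝ) * Real.exp (-(2 * γ * x ^ β)))) (Ioi 0) :=
      (hB1.const_mul _).add (hB0.const_mul _)
    refine Integrable.mono' hBint (hcg.aestronglyMeasurable.restrict) ?_
    refine (ae_restrict_iff' measurableSet_Ioi).mpr (Filter.Eventually.of_forall fun x hx => ?_)
    have hx0 : (0:ℝ) < x := hx
    have hE : Real.exp (-(2 * γ) * x ^ β) = Real.exp (-(2 * γ * x ^ β)) := by ring_nf
    rw [Real.norm_eq_abs, abs_of_nonneg (hgnn x)]
    simp only [hgdef, Real.rpow_zero, one_mul]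
    rw [hE]
    have := aux_poly ha hx0
    have hEp : (0:ℝ) < Real.exp (-(2 * γ * x ^ β)) := Real.exp_pos _
    nlinarith [Real.rpow_nonneg hx0.le (2 * a)]
  set I : ℝ := ∫ w in Ioi 0, g w with hIdef
  have hInn : 0 ≤ I := setIntegral_nonneg measurableSet_Ioi fun x _ => hgnn x
  refine ⟨I + 1, by linarith, fun σ h hh hhσ hσ1 => ?_⟩
  have hσ0 : (0:ℝ) < σ := hh.trans hhσ
  set c : ℝ := σ / h with hcdef
  have hc0 : 0 < c := div_pos hσ0 hh
  have hneg2 : h ^ (-2:ℝ) = (h ^ 2)⁻¹ := by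
    rw [show (-2:ℝ) = -((2:ℕ):ℝ) by norm_num, Real.rpow_neg hh.le, Real.rpow_natCast]
  -- pointwise bound
  have hpt : ∀ z ∈ Icc (0:ℝ) 1,
      (σ ^ 2 * z ^ 2 * h ^ (-2 : ℝ) + 1) ^ (-α) * (z ^ 2 * h ^ (-2 : ℝ) + 1) ^ a *
        Real.exp (-2 * γ * σ ^ β * z ^ β * h ^ (-β))
      ≤ σ ^ (-(2 * a)) * g (c * z) := by
    rintro z ⟨hz0, hz1⟩
    have hbase1 : (1:ℝ) ≤ σ ^ 2 * z ^ 2 * h ^ (-2:ℝ) + 1 := by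
      have : (0:ℝ) ≤ σ ^ 2 * z ^ 2 * h ^ (-2:ℝ) := by
        have := Real.rpow_nonneg hh.le (-2:ℝ); positivity
      linarith
    have hA : (σ ^ 2 * z ^ 2 * h ^ (-2:ℝ) + 1) ^ (-α) ≤ 1 :=
      Real.rpow_le_one_of_one_le_of_nonpos hbase1 (neg_nonpos.mpr hα)
    have hAnn : 0 ≤ (σ ^ 2 * z ^ 2 * h ^ (-2:ℝ) + 1) ^ (-α) :=
      Real.rpow_nonneg (by linarith) _
    -- B bound
    have hσ2 : (0:ℝ) < σ ^ 2 := by positivity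
    have he1 : ((c * z) ^ 2 + 1) / σ ^ 2 = z ^ 2 * (h ^ 2)⁻¹ + (σ ^ 2)⁻¹ := by
      rw [hcdef]; field_simp
    have hbB : z ^ 2 * h ^ (-2:ℝ) + 1 ≤ ((c * z) ^ 2 + 1) / σ ^ 2 := by
      rw [hneg2, he1]
      have : (1:ℝ) ≤ (σ ^ 2)⁻¹ := by
        rw [le_inv_comm₀ one_pos hσ2]
        · nlinarith
      linarith
    have h4 : (((c * z) ^ 2 + 1) / σ ^ 2) ^ a = ((c * z) ^ 2 + 1) ^ a * σ ^ (-(2 * a)) := by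
      rw [Real.div_rpow (by positivity) (by positivity), ← Real.rpow_natCast σ 2,
        ← Real.rpow_mul hσ0.le, div_eq_mul_inv, ← Real.rpow_neg hσ0.le]
      norm_num
    have hbnn : (0:ℝ) ≤ z ^ 2 * h ^ (-2:ℝ) + 1 := by
      have := Real.rpow_nonneg hh.le (-2:ℝ); positivity
    have hB : (z ^ 2 * h ^ (-2:ℝ) + 1) ^ a ≤ ((c * z) ^ 2 + 1) ^ a * σ ^ (-(2 * a)) := by
      rw [← h4]; exact Real.rpow_le_rpow hbnn hbB ha
    have hcz : (c * z) ^ β = σ ^ β * z ^ β * h ^ (-β) := by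
      rw [hcdef, Real.rpow_neg hh.le, show σ / h * z = σ * z / h by ring,
        Real.div_rpow (by positivity) hh.le, Real.mul_rpow hσ0.le hz0]
      ring
    have hE : -2 * γ * σ ^ β * z ^ β * h ^ (-β) = -(2 * γ) * (c * z) ^ β := by
      rw [hcz]; ring
    have hBnn : 0 ≤ (z ^ 2 * h ^ (-2:ℝ) + 1) ^ a := Real.rpow_nonneg hbnn _
    have hEpos : 0 < Real.exp (-2 * γ * σ ^ β * z ^ β * h ^ (-β)) := Real.exp_pos _
    calc (σ ^ 2 * z ^ 2 * h ^ (-2 : ℝ) + 1) ^ (-α) * (z ^ 2 * h ^ (-2 : ℝ) + 1) ^ a *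
          Real.exp (-2 * γ * σ ^ β * z ^ β * h ^ (-β))
        ≤ 1 * (((c * z) ^ 2 + 1) ^ a * σ ^ (-(2 * a))) *
          Real.exp (-2 * γ * σ ^ β * z ^ β * h ^ (-β)) := by
          exact mul_le_mul_of_nonneg_right (mul_le_mul hA hB hBnn zero_le_one) hEpos.le
      _ = σ ^ (-(2 * a)) * g (c * z) := by
          simp only [hgdef]
          rw [hE]
          ring
  -- continuity of the integrand
  have hFc : Continuous fun z : ℝ => (σ ^ 2 * z ^ 2 * h ^ (-2 : ℝ) + 1) ^ (-α) *
      (z ^ 2 * h ^ (-2 : ℝ) + 1) ^ a * Real.exp (-2 * γ * σ ^ β * z ^ β * h ^ (-β)) := by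
    have hhn : (0:ℝ) ≤ h ^ (-2:ℝ) := Real.rpow_nonneg hh.le _
    have c1 : Continuous fun z : ℝ => (σ ^ 2 * z ^ 2 * h ^ (-2:ℝ) + 1) ^ (-α) :=
      ((((continuous_const.mul (continuous_pow 2)).mul continuous_const).add continuous_const :
        Continuous fun z : ℝ => σ ^ 2 * z ^ 2 * h ^ (-2:ℝ) + 1)).rpow_const
        fun x => Or.inl (by show σ ^ 2 * x ^ 2 * h ^ (-2:ℝ) + 1 ≠ 0; exact ne_of_gt (by have := mul_nonneg (mul_nonneg (sq_nonneg σ) (sq_nonneg x)) hhn; linarith))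
    have c2 : Continuous fun z : ℝ => (z ^ 2 * h ^ (-2:ℝ) + 1) ^ a :=
      ((((continuous_pow 2).mul continuous_const).add continuous_const :
        Continuous fun z : ℝ => z ^ 2 * h ^ (-2:ℝ) + 1)).rpow_const
        fun x => Or.inl (by show x ^ 2 * h ^ (-2:ℝ) + 1 ≠ 0; exact ne_of_gt (by have := mul_nonneg (sq_nonneg x) hhn; linarith))
    exact (c1.mul c2).mul (Real.continuous_exp.comp
      ((continuous_const.mul cβ).mul continuous_const))
  have hGc : Continuous fun z : ℝ => σ ^ (-(2 * a)) * g (c * z) :=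
    continuous_const.mul (hcg.comp (continuous_const.mul continuous_id))
  have hmono := intervalIntegral.integral_mono_on (μ := volume) (by norm_num : (0:ℝ) ≤ 1)
    (hFc.intervalIntegrable 0 1) (hGc.intervalIntegrable 0 1) hpt
  set J : ℝ := ∫ x in (0:ℝ)..c, g x with hJdef
  have hcomp : (∫ z in (0:ℝ)..1, g (c * z)) = c⁻¹ * J := by
    rw [intervalIntegral.integral_comp_mul_left g hc0.ne']
    norm_num [smul_eq_mul, hJdef]
  have htail : J ≤ I := by
    rw [hJdef, intervalIntegral.integral_of_le hc0.le, hIdef]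
    exact setIntegral_mono_set hgi (Filter.Eventually.of_forall fun x => hgnn x)
      Ioc_subset_Ioi_self.eventuallyLE
  have hrw : σ ^ (-(2 * a + 1)) = σ ^ (-(2 * a)) * σ⁻¹ := by
    rw [← Real.rpow_neg_one σ, ← Real.rpow_add hσ0]
    ring_nf
  have hσann : (0:ℝ) ≤ σ ^ (-(2 * a)) := Real.rpow_nonneg hσ0.le _
  calc h⁻¹ * (∫ z in (0 : ℝ)..1,
        (σ ^ 2 * z ^ 2 * h ^ (-2 : ℝ) + 1) ^ (-α) * (z ^ 2 * h ^ (-2 : ℝ) + 1) ^ a *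
          Real.exp (-2 * γ * σ ^ β * z ^ β * h ^ (-β)))
      ≤ h⁻¹ * ∫ z in (0:ℝ)..1, σ ^ (-(2 * a)) * g (c * z) :=
        mul_le_mul_of_nonneg_left hmono (inv_nonneg.mpr hh.le)
    _ = h⁻¹ * (σ ^ (-(2 * a)) * (c⁻¹ * J)) := by
        rw [intervalIntegral.integral_const_mul, hcomp]
    _ = σ ^ (-(2 * a)) * σ⁻¹ * J := by
        rw [hcdef]
        field_simp
    _ ≤ σ ^ (-(2 * a)) * σ⁻¹ * (I + 1) := by
        have hnn : (0:ℝ) ≤ σ ^ (-(2 * a)) * σ⁻¹ := by positivity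
        exact mul_le_mul_of_nonneg_left (by linarith) hnn
    _ = (I + 1) * σ ^ (-(2 * a + 1)) := by rw [hrw]; ring
end
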